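/- A simple graph G with n vertices and m edges has a Hamiltonian path if and only if there exists a permutation π of the columns of its incidence matrix A with cons1(π(A)) ≤ 2m − (n−1). -/

import Mathlib

/-!
Each row of the incidence matrix has exactly two ones. After the columns are reordered by `π`,
the row of an edge forms a single block of ones when its endpoints are consecutive in the order
`π` and two blocks otherwise, so `cons1 (π A) = 2m - k`, where `k` counts the edges joining
`π`-consecutive vertices. There are only `n - 1` consecutive pairs, so `k ≤ n - 1`, with equality
exactly when every consecutive pair is an edge, i.e. when `π` lists the vertices along a
Hamiltonian path.
-/

open Finset

/-- Extend a row of length `n` by zeros to an `ℕ`-indexed row. -/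
def rowExt (n : ℕ) (r : Fin n → Bool) : ℕ → Bool :=
  fun j => if h : j < n then r ⟨j, h⟩ else false

/-- The number of maximal blocks of consecutive ones in a row. -/
def cons1Row (n : ℕ) (r : Fin n → Bool) : ℕ :=
  ((Finset.range n).filter
    (fun j => rowExt n r j = true ∧ (j = 0 ∨ rowExt n r (j - 1) = false))).card

/-- The total number of maximal blocks of consecutive ones in a binary matrix. -/
def cons1 {m n : ℕ} (A : Fin m → Fin n → Bool) : ℕ :=
  ∑ i, cons1Row n (A i)

/-- Append a column of zeros to the right of a binary matrix. -/
def appendZero {m n : ℕ} (A : Fin m → Fin n → Bool) : Fin m → Fin (n + 1) → Bool :=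
  fun i j => if h : (j : ℕ) < n then A i ⟨j, h⟩ else false

/-- Hamming distance between two columns of a binary matrix. -/
def colHam {m N : ℕ} (B : Fin m → Fin N → Bool) (a b : Fin N) : ℕ :=
  hammingDist (fun i => B i a) (fun i => B i b)


section

variable {n : ℕ}

lemma rowExt_eq_true_iff_of_pair {r : Fin n → Bool} {a b : Fin n}
    (hr : ∀ i, r i = true ↔ i = a ∨ i = b) (j : ℕ) :
    rowExt n r j = true ↔ j = a ∨ j = b := by
  unfold rowExt
  split_ifs with hj
  · simp [hr, Fin.ext_iff]
  · simp only [false_iff]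
    omega

lemma cons1Row_pair_of_lt {r : Fin n → Bool} {a b : Fin n} (hab : (a : ℕ) < b)
    (hr : ∀ i, r i = true ↔ i = a ∨ i = b) :
    cons1Row n r = if (a : ℕ) + 1 = b then 1 else 2 := by
  have hb := b.isLt
  have hstarts : (range n).filter
      (fun j => rowExt n r j = true ∧ (j = 0 ∨ rowExt n r (j - 1) = false)) =
      if (a : ℕ) + 1 = b then {(a : ℕ)} else {(a : ℕ), (b : ℕ)} := by
    ext j
    simp only [mem_filter, mem_range, ← Bool.not_eq_true, rowExt_eq_true_iff_of_pair hr]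
    split_ifs <;> simp only [mem_singleton, mem_insert] <;> omega
  rw [cons1Row, hstarts]
  split_ifs
  · rfl
  · exact card_pair (by omega)

lemma cons1Row_pair {r : Fin n → Bool} {a b : Fin n} (hab : a ≠ b)
    (hr : ∀ i, r i = true ↔ i = a ∨ i = b) :
    cons1Row n r = if (a : ℕ) + 1 = b ∨ (b : ℕ) + 1 = a then 1 else 2 := by
  rcases lt_or_gt_of_ne (Fin.val_ne_of_ne hab) with hlt | hlt
  · rw [cons1Row_pair_of_lt hlt hr]
    exact if_congr (by omega) rfl rfl
  · rw [cons1Row_pair_of_lt hlt fun i => (hr i).trans or_comm]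
    exact if_congr (by omega) rfl rfl

def IsConsecutive (π : Equiv.Perm (Fin n)) (z : Sym2 (Fin n)) : Prop :=
  ∃ i : ℕ, ∃ h : i + 1 < n, z = s(π ⟨i, Nat.lt_of_succ_lt h⟩, π ⟨i + 1, h⟩)

lemma isConsecutive_mk_iff (π : Equiv.Perm (Fin n)) (u v : Fin n) :
    IsConsecutive π s(u, v) ↔
      (π.symm u : ℕ) + 1 = π.symm v ∨ (π.symm v : ℕ) + 1 = π.symm u := by
  constructor
  · rintro ⟨i, h, huv⟩
    rcases Sym2.eq_iff.1 huv with ⟨rfl, rfl⟩ | ⟨rfl, rfl⟩ <;> simp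
  · have hstep : ∀ p q : Fin n, (p : ℕ) + 1 = q → IsConsecutive π s(π p, π q) := fun p q hpq =>
      ⟨p, by omega, by rw [Fin.eta, show (⟨p + 1, _⟩ : Fin n) = q from Fin.ext hpq]⟩
    rintro (h | h)
    · simpa using hstep _ _ h
    · simpa [Sym2.eq_swap] using hstep _ _ h

open Classical in
lemma cons1Row_of_mem_iff {π : Equiv.Perm (Fin n)} {r : Fin n → Bool}
    {z : Sym2 (Fin n)} (hz : ¬ z.IsDiag) (hr : ∀ i, r i = true ↔ π i ∈ z) :
    cons1Row n r = if IsConsecutive π z then 1 else 2 := by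
  induction z using Sym2.ind with
  | _ u v =>
  have hne : π.symm u ≠ π.symm v := by simpa using hz
  have hr' : ∀ i, r i = true ↔ i = π.symm u ∨ i = π.symm v := fun i => by
    rw [hr, Sym2.mem_iff, ← Equiv.eq_symm_apply, ← Equiv.eq_symm_apply]
  rw [cons1Row_pair hne hr']
  simp only [isConsecutive_mk_iff]

open Classical in
lemma cons1_add_card_isConsecutive {m : ℕ} {A : Fin m → Fin n → Bool}
    {z : Fin m → Sym2 (Fin n)} (hz : ∀ j, ¬ (z j).IsDiag) (hA : ∀ j i, A j i = true ↔ i ∈ z j)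
    (π : Equiv.Perm (Fin n)) :
    cons1 (fun j i => A j (π i)) + #{j | IsConsecutive π (z j)} = 2 * m := by
  have hrow : ∀ j,
      cons1Row n (fun i => A j (π i)) + (if IsConsecutive π (z j) then 1 else 0) = 2 := fun j => by
    rw [cons1Row_of_mem_iff (hz j) fun i => hA j (π i)]
    split_ifs <;> rfl
  rw [cons1, card_filter, ← sum_add_distrib]
  simp [hrow, mul_comm]

lemma eq_of_consecutive_pair_eq (π : Equiv.Perm (Fin n)) {a b : ℕ} (ha : a + 1 < n)
    (hb : b + 1 < n)
    (h : s(π ⟨a, Nat.lt_of_succ_lt ha⟩, π ⟨a + 1, ha⟩) =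
      s(π ⟨b, Nat.lt_of_succ_lt hb⟩, π ⟨b + 1, hb⟩)) :
    a = b := by
  rcases Sym2.eq_iff.1 h with ⟨h, -⟩ | ⟨h, h'⟩
  · exact congrArg Fin.val (π.injective h)
  · have h₁ : a = b + 1 := congrArg Fin.val (π.injective h)
    have h₂ : a + 1 = b := congrArg Fin.val (π.injective h')
    omega

open Classical in
noncomputable def edgeSteps (G : SimpleGraph (Fin n)) (π : Equiv.Perm (Fin n)) :
    Finset ℕ :=
  {i ∈ range (n - 1) | ∃ h : i + 1 < n, G.Adj (π ⟨i, Nat.lt_of_succ_lt h⟩) (π ⟨i + 1, h⟩)}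

lemma mem_edgeSteps {G : SimpleGraph (Fin n)} {π : Equiv.Perm (Fin n)} {i : ℕ} :
    i ∈ edgeSteps G π ↔
      ∃ h : i + 1 < n, G.Adj (π ⟨i, Nat.lt_of_succ_lt h⟩) (π ⟨i + 1, h⟩) := by
  simp only [edgeSteps, mem_filter, mem_range]
  exact ⟨And.right, fun h => ⟨by have := h.fst; omega, h⟩⟩

open Classical in
lemma card_isConsecutive_edges {m : ℕ} {G : SimpleGraph (Fin n)} (e : Fin m ≃ G.edgeSet)
    (π : Equiv.Perm (Fin n)) :
    #{j | IsConsecutive π (e j)} = #(edgeSteps G π) := by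
  symm
  refine card_bij (fun i hi => e.symm ⟨s(π ⟨i, Nat.lt_of_succ_lt (mem_edgeSteps.1 hi).fst⟩,
    π ⟨i + 1, (mem_edgeSteps.1 hi).fst⟩), (mem_edgeSteps.1 hi).snd⟩) ?_ ?_ ?_
  · intro i hi
    simpa using ⟨i, (mem_edgeSteps.1 hi).fst, rfl⟩
  · intro a ha b hb hab
    exact eq_of_consecutive_pair_eq π _ _ (congrArg Subtype.val (e.symm.injective hab))
  · intro j hj
    obtain ⟨i, h, hij⟩ := (mem_filter.1 hj).2
    have hadj : G.Adj (π ⟨i, Nat.lt_of_succ_lt h⟩) (π ⟨i + 1, h⟩) :=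
      G.mem_edgeSet.1 (hij ▸ (e j).2)
    exact ⟨i, mem_edgeSteps.2 ⟨h, hadj⟩, e.symm_apply_eq.2 (Subtype.ext hij.symm)⟩

lemma forall_adj_iff_le_card_edgeSteps (G : SimpleGraph (Fin n))
    (π : Equiv.Perm (Fin n)) :
    (∀ i : ℕ, (h : i + 1 < n) → G.Adj (π ⟨i, Nat.lt_of_succ_lt h⟩) (π ⟨i + 1, h⟩)) ↔
      n - 1 ≤ #(edgeSteps G π) := by
  classical
  rw [edgeSteps]
  nth_rw 1 [← card_range (n - 1)]
  rw [(card_filter_le _ _).ge_iff_eq, card_filter_eq_iff]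
  simp only [mem_range]
  exact ⟨fun h i hi => ⟨by omega, h i _⟩, fun h i hi => (h i (by omega)).snd⟩

end

/-- G has a Hamiltonian path iff some column permutation π of its
incidence matrix satisfies cons1(π(A)) ≤ 2m − (n−1). -/
theorem stmt3 (n m : ℕ) (G : SimpleGraph (Fin n)) (e : Fin m ≃ G.edgeSet)
    (A : Fin m → Fin n → Bool)
    (hA : ∀ j i, A j i = true ↔ i ∈ (e j : Sym2 (Fin n))) :
    (∃ ℓ : Equiv.Perm (Fin n),
        ∀ i : ℕ, (h : i + 1 < n) → G.Adj (ℓ ⟨i, by omega⟩) (ℓ ⟨i + 1, h⟩)) ↔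
      (∃ π : Equiv.Perm (Fin n),
        (cons1 (fun j i => A j (π i)) : ℤ) ≤ 2 * (m : ℤ) - ((n : ℤ) - 1)) := by
  have hdiag : ∀ j, ¬ (e j : Sym2 (Fin n)).IsDiag := fun j => G.not_isDiag_of_mem_edgeSet (e j).2
  refine exists_congr fun π => ?_
  have hcount := cons1_add_card_isConsecutive hdiag hA π
  rw [card_isConsecutive_edges e π] at hcount
  rw [forall_adj_iff_le_card_edgeSteps]
  omega
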